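/- arXiv:2505.01167 — 7 statements merged into one kernel-verified Lean document; each statement's English description precedes it below -/
import Mathlib

section
/- With the homogeneous information-transfer setup, if O : Finset (Fin n) → ℝ satisfies O c ≥ 0 for every subset c with 2 ≤ |c|, then T(O) ≤ Σ over subsets c of Fin n with 2 ≤ |c| of |c| · N^(1−|c|) · (Σ_{a ⊇ c, 2 ≤ |a|} O a). Equivalently, the quadratic part of T is nonpositive on the nonnegative orthant (all coefficients of the quadratic form are nonpositive). -/
open Finset

/-- Sum of `O a` over all groups `a` (of size at least 2) containing the group `c`:
the number of cells available for a meeting of all members of `c`. -/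
noncomputable def knownSum {n : ℕ} (c : Finset (Fin n)) (O : Finset (Fin n) → ℝ) : ℝ :=
  ∑ a ∈ univ.filter (fun a : Finset (Fin n) => c ⊆ a ∧ 2 ≤ a.card), O a

/-- The probability that all members of the group `c` meet in a common cell. -/
noncomputable def infoP {n : ℕ} (N : ℝ) (c : Finset (Fin n)) (O : Finset (Fin n) → ℝ) : ℝ :=
  N ^ (-(c.card : ℤ)) * knownSum c O

/-- The number of cells known by at least one but not all members of the group `c`. -/
noncomputable def infoA {n : ℕ} (N : ℝ) (c : Finset (Fin n)) (O : Finset (Fin n) → ℝ) : ℝ :=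
  (c.card : ℝ) * N - (c.card : ℝ) * knownSum c O -
    ∑ a ∈ univ.filter (fun a : Finset (Fin n) => a ⊂ c ∧ 2 ≤ a.card), ((a.card : ℝ) - 1) * O a

/-- The total information transfer. -/
noncomputable def infoT {n : ℕ} (N : ℝ) (O : Finset (Fin n) → ℝ) : ℝ :=
  ∑ c ∈ univ.filter (fun c : Finset (Fin n) => 2 ≤ c.card), infoP N c O * infoA N c O

/-- The feasible region: all overlaps nonnegative, and no individual over-shares. -/
def feasible {n : ℕ} (N : ℝ) (O : Finset (Fin n) → ℝ) : Prop :=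
  (∀ c : Finset (Fin n), 2 ≤ c.card → 0 ≤ O c) ∧
  (∀ k : Fin n, ∑ c ∈ univ.filter (fun c : Finset (Fin n) => k ∈ c ∧ 2 ≤ c.card), O c ≤ N)


theorem quadratic_part_nonpos (n : ℕ) (hn : 2 ≤ n) (N : ℝ) (hN : 0 < N)
    (O : Finset (Fin n) → ℝ) (hO : ∀ c : Finset (Fin n), 2 ≤ c.card → 0 ≤ O c) :
    infoT N O ≤
      ∑ c ∈ univ.filter (fun c : Finset (Fin n) => 2 ≤ c.card),
        (c.card : ℝ) * N ^ (1 - (c.card : ℤ)) * knownSum c O := by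
  unfold infoT
  apply Finset.sum_le_sum
  intro c hc
  simp only [mem_filter] at hc
  have hK : 0 ≤ knownSum c O := by
    apply Finset.sum_nonneg
    intro a ha
    simp only [mem_filter] at ha
    exact hO a ha.2.2
  have hS : 0 ≤ ∑ a ∈ univ.filter (fun a : Finset (Fin n) => a ⊂ c ∧ 2 ≤ a.card),
      ((a.card : ℝ) - 1) * O a := by
    apply Finset.sum_nonneg
    intro a ha
    simp only [mem_filter] at ha
    have h1 : (1:ℝ) ≤ (a.card : ℝ) := by exact_mod_cast ha.2.2.trans' (by norm_num)
    exact mul_nonneg (by linarith) (hO a ha.2.2)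
  have hP : 0 ≤ infoP N c O :=
    mul_nonneg (le_of_lt (zpow_pos hN _)) hK
  have hA : infoA N c O ≤ (c.card : ℝ) * N := by
    unfold infoA
    have : (c.card : ℝ) * knownSum c O ≥ 0 :=
      mul_nonneg (by positivity) hK
    linarith
  calc infoP N c O * infoA N c O ≤ infoP N c O * ((c.card : ℝ) * N) :=
        mul_le_mul_of_nonneg_left hA hP
    _ = (c.card : ℝ) * N ^ (1 - (c.card : ℤ)) * knownSum c O := by
        unfold infoP
        rw [show (1 : ℤ) - (c.card : ℤ) = -(c.card : ℤ) + 1 by ring,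
          zpow_add₀ (ne_of_gt hN), zpow_one]
        ring
end

section
/- With the homogeneous information-transfer setup, let O* be given by O*(Finset.univ) = N/2 and O* c = 0 for all other c. If ε : Finset (Fin n) → ℝ satisfies ε c ≥ 0 for every subset c with 2 ≤ |c|, then T(O* + ε) − T(O*) − T(ε) ≤ − Σ over subsets c with 2 ≤ |c| of (Σ_{a ⊆ c, 2 ≤ |a|} |a|·N^(1−|a|)) · (ε c). (This is the statement v ≤ −l, namely that each component of O*ᵀM is at most the negative of the corresponding linear coefficient of T.) -/
open Finset

noncomputable def auxL {n : ℕ} (c : Finset (Fin n)) (O : Finset (Fin n) → ℝ) : ℝ :=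
  (c.card : ℝ) * knownSum c O +
    ∑ a ∈ univ.filter (fun a : Finset (Fin n) => a ⊂ c ∧ 2 ≤ a.card), ((a.card : ℝ) - 1) * O a

lemma infoA_eq {n : ℕ} (N : ℝ) (c : Finset (Fin n)) (O : Finset (Fin n) → ℝ) :
    infoA N c O = (c.card : ℝ) * N - auxL c O := by
  simp [infoA, auxL]; ring

lemma knownSum_add {n : ℕ} (c : Finset (Fin n)) (O ε : Finset (Fin n) → ℝ) :
    knownSum c (O + ε) = knownSum c O + knownSum c ε := by
  simp [knownSum, Finset.sum_add_distrib]

lemma auxL_add {n : ℕ} (c : Finset (Fin n)) (O ε : Finset (Fin n) → ℝ) :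
    auxL c (O + ε) = auxL c O + auxL c ε := by
  simp only [auxL, knownSum_add, Pi.add_apply, mul_add]
  rw [Finset.sum_add_distrib]
  ring

lemma infoP_add {n : ℕ} (N : ℝ) (c : Finset (Fin n)) (O ε : Finset (Fin n) → ℝ) :
    infoP N c (O + ε) = infoP N c O + infoP N c ε := by
  simp [infoP, knownSum_add, mul_add]

lemma cross {n : ℕ} (N : ℝ) (O ε : Finset (Fin n) → ℝ) :
    infoT N (O + ε) - infoT N O - infoT N ε =
      ∑ c ∈ univ.filter (fun c : Finset (Fin n) => 2 ≤ c.card),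
        (-(infoP N c O * auxL c ε) - infoP N c ε * auxL c O) := by
  simp only [infoT, ← Finset.sum_sub_distrib]
  refine Finset.sum_congr rfl fun c _ => ?_
  rw [infoP_add, infoA_eq, infoA_eq, infoA_eq, auxL_add]
  ring

lemma swap {n : ℕ} (N : ℝ) (ε : Finset (Fin n) → ℝ) :
    ∑ c ∈ univ.filter (fun c : Finset (Fin n) => 2 ≤ c.card),
      (∑ a ∈ univ.filter (fun a : Finset (Fin n) => a ⊆ c ∧ 2 ≤ a.card),
        (a.card : ℝ) * N ^ (1 - (a.card : ℤ))) * ε c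
    = ∑ c ∈ univ.filter (fun c : Finset (Fin n) => 2 ≤ c.card),
      ((c.card : ℝ) * N ^ (1 - (c.card : ℤ))) * knownSum c ε := by
  have h1 : ∀ c : Finset (Fin n),
      univ.filter (fun a : Finset (Fin n) => a ⊆ c ∧ 2 ≤ a.card)
        = (univ.filter (fun a : Finset (Fin n) => 2 ≤ a.card)).filter (fun a => a ⊆ c) := by
    intro c; rw [Finset.filter_filter]; exact Finset.filter_congr fun a _ => by tauto
  have h2 : ∀ c : Finset (Fin n),
      univ.filter (fun a : Finset (Fin n) => c ⊆ a ∧ 2 ≤ a.card)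
        = (univ.filter (fun a : Finset (Fin n) => 2 ≤ a.card)).filter (fun a => c ⊆ a) := by
    intro c; rw [Finset.filter_filter]; exact Finset.filter_congr fun a _ => by tauto
  calc ∑ c ∈ univ.filter (fun c : Finset (Fin n) => 2 ≤ c.card),
      (∑ a ∈ univ.filter (fun a : Finset (Fin n) => a ⊆ c ∧ 2 ≤ a.card),
        (a.card : ℝ) * N ^ (1 - (a.card : ℤ))) * ε c
      = ∑ c ∈ univ.filter (fun c : Finset (Fin n) => 2 ≤ c.card),
          ∑ a ∈ univ.filter (fun a : Finset (Fin n) => 2 ≤ a.card),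
            (if a ⊆ c then ((a.card : ℝ) * N ^ (1 - (a.card : ℤ))) * ε c else 0) := by
        refine Finset.sum_congr rfl fun c _ => ?_
        rw [h1 c, Finset.sum_filter, Finset.sum_mul]
        simp [ite_mul]
    _ = ∑ a ∈ univ.filter (fun a : Finset (Fin n) => 2 ≤ a.card),
          ∑ c ∈ univ.filter (fun c : Finset (Fin n) => 2 ≤ c.card),
            (if a ⊆ c then ((a.card : ℝ) * N ^ (1 - (a.card : ℤ))) * ε c else 0) :=
        Finset.sum_comm
    _ = ∑ c ∈ univ.filter (fun c : Finset (Fin n) => 2 ≤ c.card),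
          ((c.card : ℝ) * N ^ (1 - (c.card : ℤ))) * knownSum c ε := by
        refine Finset.sum_congr rfl fun c _ => ?_
        rw [knownSum, h2 c, Finset.mul_sum]
        conv_rhs => rw [Finset.sum_filter]

theorem cross_term_le_neg_linear (n : ℕ) (hn : 2 ≤ n) (N : ℝ) (hN : 0 < N)
    (Ostar : Finset (Fin n) → ℝ)
    (hOstar : Ostar = fun c => if c = Finset.univ then N / 2 else 0)
    (ε : Finset (Fin n) → ℝ) (hε : ∀ c : Finset (Fin n), 2 ≤ c.card → 0 ≤ ε c) :
    infoT N (Ostar + ε) - infoT N Ostar - infoT N ε ≤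
      - ∑ c ∈ univ.filter (fun c : Finset (Fin n) => 2 ≤ c.card),
          (∑ a ∈ univ.filter (fun a : Finset (Fin n) => a ⊆ c ∧ 2 ≤ a.card),
            (a.card : ℝ) * N ^ (1 - (a.card : ℤ))) * ε c := by
  have hks : ∀ c : Finset (Fin n), knownSum c Ostar = N / 2 := by
    intro c
    rw [hOstar, knownSum]
    simp [Finset.sum_ite_eq', Finset.subset_univ, Finset.card_univ, hn]
  have hL : ∀ c : Finset (Fin n), auxL c Ostar = (c.card : ℝ) * (N / 2) := by
    intro c
    rw [auxL, hks]
    have hz : ∀ a ∈ univ.filter (fun a : Finset (Fin n) => a ⊂ c ∧ 2 ≤ a.card),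
        ((a.card : ℝ) - 1) * Ostar a = 0 := by
      intro a ha
      simp only [Finset.mem_filter] at ha
      have hne : a ≠ Finset.univ :=
        Finset.ssubset_univ_iff.mp (lt_of_lt_of_le ha.2.1 le_top)
      rw [hOstar]
      simp [hne]
    rw [Finset.sum_congr rfl hz, Finset.sum_const_zero, add_zero]
  rw [cross N Ostar ε]
  have hneg : (∑ c ∈ univ.filter (fun c : Finset (Fin n) => 2 ≤ c.card),
      (-(infoP N c Ostar * auxL c ε) - infoP N c ε * auxL c Ostar))
      = - ∑ c ∈ univ.filter (fun c : Finset (Fin n) => 2 ≤ c.card),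
          (infoP N c Ostar * auxL c ε + infoP N c ε * auxL c Ostar) := by
    rw [← Finset.sum_neg_distrib]
    exact Finset.sum_congr rfl fun c _ => by ring
  rw [hneg, neg_le_neg_iff, swap N ε]
  apply Finset.sum_le_sum
  intro c hc
  rw [infoP, infoP, hks, hL]
  have hpow : N ^ ((1:ℤ) - (c.card : ℤ)) = N ^ (-(c.card : ℤ)) * N := by
    rw [sub_eq_add_neg, add_comm, zpow_add₀ hN.ne', zpow_one]
  have hsub : 0 ≤ ∑ a ∈ univ.filter (fun a : Finset (Fin n) => a ⊂ c ∧ 2 ≤ a.card),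
      ((a.card : ℝ) - 1) * ε a := by
    apply Finset.sum_nonneg
    intro a ha
    simp only [Finset.mem_filter] at ha
    have h2 := ha.2.2
    have h1 : (2:ℝ) ≤ (a.card : ℝ) := by exact_mod_cast h2
    exact mul_nonneg (by linarith) (hε a h2)
  have hNpow : 0 ≤ N ^ (-(c.card : ℤ)) := le_of_lt (zpow_pos hN _)
  rw [auxL, hpow]
  nlinarith [mul_nonneg (mul_nonneg hNpow hN.le) hsub]
end

section
/- With the homogeneous information-transfer setup and feasible region Ω, let O* be given by O*(Finset.univ) = N/2 and O* c = 0 for all other c. If ε : Finset (Fin n) → ℝ satisfies ε c ≥ 0 for every subset c with 2 ≤ |c| and O* + ε ∈ Ω, then T(O* + ε) ≤ T(O*). (First perturbation lemma: nonnegative feasible perturbations of O* cannot increase the information transfer.) -/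
open Finset

theorem first_perturbation_lemma (n : ℕ) (hn : 2 ≤ n) (N : ℝ) (hN : 0 < N)
    (Ostar : Finset (Fin n) → ℝ)
    (hOstar : Ostar = fun c => if c = Finset.univ then N / 2 else 0)
    (ε : Finset (Fin n) → ℝ) (hε : ∀ c : Finset (Fin n), 2 ≤ c.card → 0 ≤ ε c)
    (hfeas : feasible N (Ostar + ε)) :
    infoT N (Ostar + ε) ≤ infoT N Ostar := by
  unfold infoT
  apply Finset.sum_le_sum
  intro c hc
  simp only [mem_filter, mem_univ, true_and] at hc
  set S : ℝ := ∑ a ∈ univ.filter (fun a : Finset (Fin n) => c ⊆ a ∧ 2 ≤ a.card), ε a with hSdef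
  set D : ℝ := ∑ a ∈ univ.filter (fun a : Finset (Fin n) => a ⊂ c ∧ 2 ≤ a.card),
      ((a.card : ℝ) - 1) * ε a with hDdef
  have hS : 0 ≤ S := by
    apply Finset.sum_nonneg
    intro a ha
    simp only [mem_filter, mem_univ, true_and] at ha
    exact hε a ha.2
  have hD : 0 ≤ D := by
    apply Finset.sum_nonneg
    intro a ha
    simp only [mem_filter, mem_univ, true_and] at ha
    have h1 : (1:ℝ) ≤ (a.card : ℝ) := by exact_mod_cast Nat.one_le_of_lt ha.2
    have := hε a ha.2
    nlinarith
  have hk1 : knownSum c Ostar = N / 2 := by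
    unfold knownSum
    rw [hOstar]
    rw [Finset.sum_eq_single Finset.univ]
    · simp
    · intro a _ hne; simp [hne]
    · intro h
      exact absurd (by simp [Finset.subset_univ, hn] : (Finset.univ : Finset (Fin n)) ∈
        univ.filter (fun a : Finset (Fin n) => c ⊆ a ∧ 2 ≤ a.card)) h
  have hk2 : knownSum c (Ostar + ε) = N / 2 + S := by
    unfold knownSum
    simp only [Pi.add_apply, Finset.sum_add_distrib]
    rw [← hk1]; rfl
  have hprop0 : ∀ a ∈ univ.filter (fun a : Finset (Fin n) => a ⊂ c ∧ 2 ≤ a.card),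
      Ostar a = 0 := by
    intro a ha
    simp only [mem_filter, mem_univ, true_and] at ha
    have hne : a ≠ Finset.univ := by
      intro h
      subst h
      exact ha.1.not_subset (Finset.subset_univ c)
    rw [hOstar]; simp [hne]
  have hp1 : ∑ a ∈ univ.filter (fun a : Finset (Fin n) => a ⊂ c ∧ 2 ≤ a.card),
      ((a.card : ℝ) - 1) * Ostar a = 0 := by
    apply Finset.sum_eq_zero
    intro a ha
    rw [hprop0 a ha, mul_zero]
  have hp2 : ∑ a ∈ univ.filter (fun a : Finset (Fin n) => a ⊂ c ∧ 2 ≤ a.card),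
      ((a.card : ℝ) - 1) * (Ostar + ε) a = D := by
    rw [hDdef]
    apply Finset.sum_congr rfl
    intro a ha
    rw [Pi.add_apply, hprop0 a ha, zero_add]
  have hx : 0 < N ^ (-(c.card : ℤ)) := zpow_pos hN _
  have hkR : (2:ℝ) ≤ (c.card : ℝ) := by exact_mod_cast hc
  unfold infoP infoA
  rw [hk1, hk2, hp1, hp2]
  set x := N ^ (-(c.card : ℤ)) with hxdef
  set k := (c.card : ℝ) with hkdef
  have h1 : 0 ≤ x * (k * (S * S)) :=
    mul_nonneg hx.le (mul_nonneg (by linarith) (mul_self_nonneg S))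
  have h2 : 0 ≤ x * ((N / 2 + S) * D) :=
    mul_nonneg hx.le (mul_nonneg (by linarith) hD)
  nlinarith [h1, h2]
end

section
/- With the homogeneous information-transfer setup, let O* be given by O*(Finset.univ) = N/2 and O* c = 0 for all other c. For any real t with 0 ≤ t ≤ N/2, let ε : Finset (Fin n) → ℝ be given by ε(Finset.univ) = −t and ε c = 0 for all other c. Then T(O* + ε) ≤ T(O*). (Second perturbation lemma: decreasing the common overlap of all n individuals below N/2 cannot increase the information transfer.) -/
open Finset

lemma infoT_single (n : ℕ) (hn : 2 ≤ n) (N s : ℝ) :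
    infoT N (fun c : Finset (Fin n) => if c = univ then s else 0)
      = s * (N - s) *
        ∑ c ∈ univ.filter (fun c : Finset (Fin n) => 2 ≤ c.card),
          (c.card : ℝ) * N ^ (-(c.card : ℤ)) := by
  unfold infoT infoP infoA knownSum
  rw [Finset.mul_sum]
  apply Finset.sum_congr rfl
  intro c hc
  simp only [mem_filter, mem_univ, true_and] at hc
  have huniv : (univ : Finset (Fin n)) ∈
      univ.filter (fun a : Finset (Fin n) => c ⊆ a ∧ 2 ≤ a.card) := by
    simp only [mem_filter, mem_univ, true_and]
    exact ⟨subset_univ c, by simpa [card_univ] using hn⟩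
  have h1 : ∑ a ∈ univ.filter (fun a : Finset (Fin n) => c ⊆ a ∧ 2 ≤ a.card),
      (if a = univ then s else 0) = s := by
    rw [Finset.sum_ite_eq' _ _ (fun _ => s)]
    simp [huniv]
  have h2 : ∑ a ∈ univ.filter (fun a : Finset (Fin n) => a ⊂ c ∧ 2 ≤ a.card),
      ((a.card : ℝ) - 1) * (if a = univ then s else 0) = 0 := by
    apply Finset.sum_eq_zero
    intro a ha
    simp only [mem_filter, mem_univ, true_and] at ha
    have : a ≠ univ := by
      intro h; subst h
      exact absurd (subset_univ c) ha.1.2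
    simp [this]
  rw [h1, h2]
  ring

theorem second_perturbation_lemma (n : ℕ) (hn : 2 ≤ n) (N : ℝ) (hN : 0 < N)
    (Ostar : Finset (Fin n) → ℝ)
    (hOstar : Ostar = fun c => if c = Finset.univ then N / 2 else 0)
    (t : ℝ) (ht0 : 0 ≤ t) (htN : t ≤ N / 2)
    (ε : Finset (Fin n) → ℝ)
    (hε : ε = fun c => if c = Finset.univ then -t else 0) :
    infoT N (Ostar + ε) ≤ infoT N Ostar := by
  have hsum : Ostar + ε = fun c : Finset (Fin n) => if c = univ then N / 2 - t else 0 := by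
    funext c
    simp only [hOstar, hε, Pi.add_apply]
    by_cases h : c = univ <;> simp [h] <;> ring
  rw [hsum, hOstar, infoT_single n hn, infoT_single n hn]
  have hK : 0 ≤ ∑ c ∈ univ.filter (fun c : Finset (Fin n) => 2 ≤ c.card),
      (c.card : ℝ) * N ^ (-(c.card : ℤ)) := by
    apply Finset.sum_nonneg
    intro c _
    exact mul_nonneg (by positivity) (zpow_nonneg hN.le _)
  have h : (N / 2 - t) * (N - (N / 2 - t)) ≤ N / 2 * (N - N / 2) := by nlinarith
  exact mul_le_mul_of_nonneg_right h hK
end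

section
/- With the homogeneous information-transfer setup and feasible region Ω, suppose S₁ and S₂ are disjoint subsets of Fin n with S₁ ∪ S₂ = Fin n and |S₁| ≥ 2 and |S₂| ≥ 2. Let O be given by O(S₁) = O(S₂) = N and O c = 0 for every other subset c. Then O ∈ Ω and T(O) = 0. (For every group c, either its meeting probability P c O is zero or its unique-knowledge A c O is zero, so the net information transfer vanishes.) -/
open Finset

theorem split_group_zero_transfer (n : ℕ) (hn : 2 ≤ n) (N : ℝ) (hN : 0 < N)
    (S₁ S₂ : Finset (Fin n)) (hdisj : Disjoint S₁ S₂) (hunion : S₁ ∪ S₂ = Finset.univ)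
    (h1 : 2 ≤ S₁.card) (h2 : 2 ≤ S₂.card)
    (O : Finset (Fin n) → ℝ)
    (hO : O = fun c => if c = S₁ ∨ c = S₂ then N else 0) :
    feasible N O ∧ infoT N O = 0 := by
  have hS1ne : S₁.Nonempty := Finset.card_pos.mp (by omega)
  have hS2ne : S₂.Nonempty := Finset.card_pos.mp (by omega)
  have hne : S₁ ≠ S₂ := by
    intro h
    rw [h] at hdisj
    exact hS2ne.ne_empty (disjoint_self.mp hdisj)
  have hOval : ∀ a, O a = (if a = S₁ then N else 0) + (if a = S₂ then N else 0) := by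
    intro a
    rw [hO]
    by_cases ha1 : a = S₁ <;> by_cases ha2 : a = S₂ <;> simp_all
  have hks : ∀ c : Finset (Fin n),
      knownSum c O = (if c ⊆ S₁ then N else 0) + (if c ⊆ S₂ then N else 0) := by
    intro c
    unfold knownSum
    rw [Finset.sum_congr rfl (fun a _ => hOval a), Finset.sum_add_distrib,
      Finset.sum_ite_eq' _ S₁ (fun _ => N), Finset.sum_ite_eq' _ S₂ (fun _ => N)]
    simp [h1, h2]
  have hsub12 : ∀ c : Finset (Fin n), c.Nonempty → c ⊆ S₁ → ¬ c ⊆ S₂ := by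
    intro c hc hc1 hc2
    obtain ⟨x, hx⟩ := hc
    exact Finset.disjoint_left.mp hdisj (hc1 hx) (hc2 hx)
  constructor
  · constructor
    · intro c hc
      rw [hO]
      dsimp only
      split
      · exact le_of_lt hN
      · exact le_refl 0
    · intro k
      rw [Finset.sum_congr rfl (fun a _ => hOval a), Finset.sum_add_distrib,
        Finset.sum_ite_eq' _ S₁ (fun _ => N), Finset.sum_ite_eq' _ S₂ (fun _ => N)]
      have hk : k ∈ S₁ ∪ S₂ := hunion ▸ Finset.mem_univ k
      rcases Finset.mem_union.mp hk with hk1 | hk2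
      · have hk2 : k ∉ S₂ := Finset.disjoint_left.mp hdisj hk1
        simp [hk1, hk2, h1, h2]
      · have hk1 : k ∉ S₁ := Finset.disjoint_right.mp hdisj hk2
        simp [hk1, hk2, h1, h2]
  · unfold infoT
    apply Finset.sum_eq_zero
    intro c hc
    rw [Finset.mem_filter] at hc
    have hcne : c.Nonempty := Finset.card_pos.mp (by omega)
    by_cases hc1 : c ⊆ S₁
    · have hc2 : ¬ c ⊆ S₂ := hsub12 c hcne hc1
      have hA : infoA N c O = 0 := by
        unfold infoA
        rw [hks c]
        have hz : ∑ a ∈ univ.filter (fun a : Finset (Fin n) => a ⊂ c ∧ 2 ≤ a.card),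
            ((a.card : ℝ) - 1) * O a = 0 := by
          apply Finset.sum_eq_zero
          intro a ha
          rw [Finset.mem_filter] at ha
          obtain ⟨-, hac, hacard⟩ := ha
          have hane : a.Nonempty := Finset.card_pos.mp (by omega)
          have hOa : O a = 0 := by
            rw [hO]
            dsimp only
            rw [if_neg]
            rintro (rfl | rfl)
            · exact absurd (hac.trans_subset hc1) (ssubset_irrefl _)
            · exact hsub12 a hane (hac.subset.trans hc1) (subset_refl _)
          rw [hOa, mul_zero]
        rw [hz, if_pos hc1, if_neg hc2]
        ring
      rw [hA, mul_zero]
    · by_cases hc2 : c ⊆ S₂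
      · have hc1' : ¬ c ⊆ S₁ := fun h => hsub12 c hcne h hc2
        have hA : infoA N c O = 0 := by
          unfold infoA
          rw [hks c]
          have hz : ∑ a ∈ univ.filter (fun a : Finset (Fin n) => a ⊂ c ∧ 2 ≤ a.card),
              ((a.card : ℝ) - 1) * O a = 0 := by
            apply Finset.sum_eq_zero
            intro a ha
            rw [Finset.mem_filter] at ha
            obtain ⟨-, hac, hacard⟩ := ha
            have hane : a.Nonempty := Finset.card_pos.mp (by omega)
            have hOa : O a = 0 := by
              rw [hO]
              dsimp only
              rw [if_neg]
              rintro (rfl | rfl)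
              · exact hsub12 a hane (subset_refl _) (hac.subset.trans hc2)
              · exact absurd (hac.trans_subset hc2) (ssubset_irrefl _)
            rw [hOa, mul_zero]
          rw [hz, if_neg hc1', if_pos hc2]
          ring
        rw [hA, mul_zero]
      · have hP : infoP N c O = 0 := by
          unfold infoP
          rw [hks c, if_neg hc1, if_neg hc2]
          ring
        rw [hP, zero_mul]
end

section
/- With the homogeneous information-transfer setup and feasible region Ω, the function O* given by O*(Finset.univ) = N/2 and O* c = 0 for every other subset c is a global maximizer of T over Ω: O* ∈ Ω and T(O) ≤ T(O*) for every O ∈ Ω. (Main optimization theorem: when all individuals have equal foraging ability, the information transfer is maximized by sharing a single common area of size N/2, with no partial overlaps among proper subgroups.) -/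
open Finset

theorem global_maximizer_of_infoT (n : ℕ) (hn : 2 ≤ n) (N : ℝ) (hN : 0 < N)
    (Ostar : Finset (Fin n) → ℝ)
    (hOstar : Ostar = fun c => if c = Finset.univ then N / 2 else 0) :
    feasible N Ostar ∧ ∀ O : Finset (Fin n) → ℝ, feasible N O → infoT N O ≤ infoT N Ostar := by
  have hcardu : (univ : Finset (Fin n)).card = n := by simp
  -- knownSum of Ostar is always N/2
  have hks : ∀ c : Finset (Fin n), knownSum c Ostar = N / 2 := by
    intro c
    simp only [knownSum, hOstar]
    rw [Finset.sum_ite_eq' _ (Finset.univ : Finset (Fin n)) (fun _ => N / 2)]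
    have : (Finset.univ : Finset (Fin n)) ∈
        Finset.univ.filter (fun a : Finset (Fin n) => c ⊆ a ∧ 2 ≤ a.card) := by
      simp [Finset.mem_filter, hcardu, hn]
    rw [if_pos this]
  constructor
  · constructor
    · intro c _
      rw [hOstar]
      dsimp only
      split <;> linarith
    · intro k
      simp only [hOstar]
      rw [Finset.sum_ite_eq' _ (Finset.univ : Finset (Fin n)) (fun _ => N / 2)]
      have : (Finset.univ : Finset (Fin n)) ∈
          Finset.univ.filter (fun c : Finset (Fin n) => k ∈ c ∧ 2 ≤ c.card) := by
        simp [Finset.mem_filter, hcardu, hn]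
      rw [if_pos this]
      linarith
  · intro O hO
    unfold infoT
    apply Finset.sum_le_sum
    intro c hc
    rw [Finset.mem_filter] at hc
    have hc2 : 2 ≤ c.card := hc.2
    -- facts about knownSum c O
    set S := knownSum c O with hSdef
    have hS0 : 0 ≤ S := by
      apply Finset.sum_nonneg
      intro a ha
      rw [Finset.mem_filter] at ha
      exact hO.1 a ha.2.2
    have hSN : S ≤ N := by
      obtain ⟨k, hk⟩ := Finset.card_pos.mp (by omega : 0 < c.card)
      calc S ≤ ∑ a ∈ univ.filter (fun a : Finset (Fin n) => k ∈ a ∧ 2 ≤ a.card), O a := by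
            apply Finset.sum_le_sum_of_subset_of_nonneg
            · intro a ha
              rw [Finset.mem_filter] at ha ⊢
              exact ⟨ha.1, ha.2.1 hk, ha.2.2⟩
            · intro a ha _
              rw [Finset.mem_filter] at ha
              exact hO.1 a ha.2.2
        _ ≤ N := hO.2 k
    set R := ∑ a ∈ univ.filter (fun a : Finset (Fin n) => a ⊂ c ∧ 2 ≤ a.card),
        ((a.card : ℝ) - 1) * O a with hRdef
    have hR0 : 0 ≤ R := by
      apply Finset.sum_nonneg
      intro a ha
      rw [Finset.mem_filter] at ha
      have h1 : (1:ℝ) ≤ (a.card : ℝ) := by exact_mod_cast Nat.one_le_of_lt ha.2.2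
      exact mul_nonneg (by linarith) (hO.1 a ha.2.2)
    have hz : ∑ a ∈ univ.filter (fun a : Finset (Fin n) => a ⊂ c ∧ 2 ≤ a.card),
        ((a.card : ℝ) - 1) * Ostar a = 0 := by
      apply Finset.sum_eq_zero
      intro a ha
      rw [Finset.mem_filter] at ha
      have hne : a ≠ Finset.univ := by
        rintro rfl
        exact ha.2.1.not_subset (Finset.subset_univ c)
      simp [hOstar, hne]
    have ht : (0:ℝ) ≤ N ^ (-(c.card : ℤ)) := by positivity
    have hc0 : (0:ℝ) ≤ (c.card : ℝ) := by positivity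
    simp only [infoP, infoA, hks c, hz, ← hSdef, ← hRdef]
    nlinarith [mul_nonneg ht (mul_nonneg hc0 (sq_nonneg (N / 2 - S))),
      mul_nonneg (mul_nonneg ht hS0) hR0]
end

section
/- With the homogeneous information-transfer setup, let O* be given by O*(Finset.univ) = N/2 and O* c = 0 for every other subset c. Then T(O*) = (N²/4) · Σ_{k=2}^{n} (n choose k) · k · N^(−k), and consequently T(O*) tends to n(n−1)/4 as N → ∞. (At the optimum, when the number of cells is very large, the optimal value of the information-transfer function is approximately quadratic in the number of individuals.) -/
open Finset

lemma knownSum_opt {n : ℕ} (hn : 2 ≤ n) (N : ℝ) (c : Finset (Fin n)) :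
    knownSum c (fun a : Finset (Fin n) => if a = Finset.univ then N / 2 else 0) = N / 2 := by
  unfold knownSum
  rw [Finset.sum_ite_eq' _ (Finset.univ : Finset (Fin n)) (fun _ => N / 2)]
  simp [Finset.card_univ, hn]

lemma exact_eq {n : ℕ} (hn : 2 ≤ n) (N : ℝ) (hN : 0 < N) :
    infoT N (fun c : Finset (Fin n) => if c = Finset.univ then N / 2 else 0) =
      N ^ 2 / 4 * ∑ k ∈ Finset.Icc 2 n, (n.choose k : ℝ) * (k : ℝ) * N ^ (-(k : ℤ)) := by
  have hA : ∀ c : Finset (Fin n),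
      infoA N c (fun a : Finset (Fin n) => if a = Finset.univ then N / 2 else 0) =
        (c.card : ℝ) * N - (c.card : ℝ) * (N / 2) := by
    intro c
    unfold infoA
    rw [knownSum_opt hn]
    have hz : ∑ a ∈ univ.filter (fun a : Finset (Fin n) => a ⊂ c ∧ 2 ≤ a.card),
        ((a.card : ℝ) - 1) * (if a = Finset.univ then N / 2 else 0) = 0 := by
      apply Finset.sum_eq_zero
      intro a ha
      simp only [Finset.mem_filter] at ha
      have : a ≠ Finset.univ := by
        rintro rfl
        exact ha.2.1.ne ((Finset.univ_subset_iff.mp ha.2.1.subset).symm)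
      simp [this]
    rw [hz]; ring
  have hT : infoT N (fun c : Finset (Fin n) => if c = Finset.univ then N / 2 else 0) =
      ∑ c ∈ univ.filter (fun c : Finset (Fin n) => 2 ≤ c.card),
        N ^ 2 / 4 * (c.card : ℝ) * N ^ (-(c.card : ℤ)) := by
    unfold infoT
    apply Finset.sum_congr rfl
    intro c _
    rw [hA c]
    unfold infoP
    rw [knownSum_opt hn]
    ring
  rw [hT]
  rw [Finset.mul_sum]
  have hmaps : ∀ c ∈ univ.filter (fun c : Finset (Fin n) => 2 ≤ c.card),
      c.card ∈ Finset.Icc 2 n := by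
    intro c hc
    simp only [Finset.mem_filter] at hc
    simp only [Finset.mem_Icc]
    exact ⟨hc.2, by simpa using Finset.card_le_univ c⟩
  rw [← Finset.sum_fiberwise_of_maps_to hmaps
    (fun c => N ^ 2 / 4 * (c.card : ℝ) * N ^ (-(c.card : ℤ)))]
  apply Finset.sum_congr rfl
  intro k hk
  simp only [Finset.mem_Icc] at hk
  have hfe : (univ.filter (fun c : Finset (Fin n) => 2 ≤ c.card)).filter
      (fun c => c.card = k) = Finset.powersetCard k (Finset.univ : Finset (Fin n)) := by
    rw [Finset.filter_filter, Finset.powersetCard_eq_filter, Finset.powerset_univ]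
    apply Finset.filter_congr
    intro c _
    constructor
    · rintro ⟨_, h⟩; exact h
    · rintro h; exact ⟨h ▸ hk.1, h⟩
  rw [hfe]
  rw [Finset.sum_congr rfl (fun c hc => by
    rw [(Finset.mem_powersetCard.mp hc).2])]
  rw [Finset.sum_const, nsmul_eq_mul, Finset.card_powersetCard, Finset.card_univ,
    Fintype.card_fin]
  ring

lemma tendsto_part {n : ℕ} (hn : 2 ≤ n) :
    Filter.Tendsto
      (fun N : ℝ => infoT N (fun c : Finset (Fin n) => if c = Finset.univ then N / 2 else 0))
      Filter.atTop (nhds ((n : ℝ) * ((n : ℝ) - 1) / 4)) := by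
  have hcong : ∀ᶠ N : ℝ in Filter.atTop,
      (∑ k ∈ Finset.Icc 2 n, (n.choose k : ℝ) * (k : ℝ) / 4 * N ^ ((2 : ℤ) - (k : ℤ))) =
        infoT N (fun c : Finset (Fin n) => if c = Finset.univ then N / 2 else 0) := by
    filter_upwards [Filter.eventually_gt_atTop (0 : ℝ)] with N hN
    rw [exact_eq hn N hN, Finset.mul_sum]
    apply Finset.sum_congr rfl
    intro k _
    have h1 : N ^ ((2 : ℤ) - (k : ℤ)) = N ^ 2 * N ^ (-(k : ℤ)) := by
      rw [← zpow_natCast N 2, ← zpow_add₀ hN.ne', sub_eq_add_neg]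
      norm_num
    rw [h1]; ring
  apply Filter.Tendsto.congr' hcong
  have hlim : Filter.Tendsto
      (fun N : ℝ => ∑ k ∈ Finset.Icc 2 n, (n.choose k : ℝ) * (k : ℝ) / 4 * N ^ ((2 : ℤ) - (k : ℤ)))
      Filter.atTop
      (nhds (∑ k ∈ Finset.Icc 2 n,
        if k = 2 then (n : ℝ) * ((n : ℝ) - 1) / 4 else 0)) := by
    apply tendsto_finset_sum
    intro k hk
    simp only [Finset.mem_Icc] at hk
    by_cases h2 : k = 2
    · subst h2
      simp only [if_pos rfl]
      refine Filter.Tendsto.congr (fun N => ?_) tendsto_const_nhds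
      rw [Nat.cast_choose_two]
      push_cast
      norm_num
    · simp only [if_neg h2]
      have hneg : (2 : ℤ) - (k : ℤ) < 0 := by
        have : 3 ≤ k := lt_of_le_of_ne hk.1 (Ne.symm h2)
        omega
      have := (tendsto_zpow_atTop_zero hneg).const_mul ((n.choose k : ℝ) * (k : ℝ) / 4)
      simpa using this
  convert hlim using 2
  rw [Finset.sum_ite_eq' (Finset.Icc 2 n) 2 (fun _ => (n : ℝ) * ((n : ℝ) - 1) / 4)]
  simp [hn]


theorem infoT_at_optimum (n : ℕ) (hn : 2 ≤ n) (N : ℝ) (hN : 0 < N) :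
    infoT N (fun c : Finset (Fin n) => if c = Finset.univ then N / 2 else 0) =
      N ^ 2 / 4 * ∑ k ∈ Finset.Icc 2 n, (n.choose k : ℝ) * (k : ℝ) * N ^ (-(k : ℤ)) ∧
    Filter.Tendsto
      (fun N : ℝ => infoT N (fun c : Finset (Fin n) => if c = Finset.univ then N / 2 else 0))
      Filter.atTop (nhds ((n : ℝ) * ((n : ℝ) - 1) / 4)) := by
  exact ⟨exact_eq hn N hN, tendsto_part hn⟩
end
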